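/- Let f(x) = a_0 x^n + ... + a_n be a real polynomial of degree n with a_0 > 0, let 2 ≤ M ≤ n, and suppose that none of the polynomials f_0, f_1, ..., f_n produced by the generalized Euclidean algorithm with step M is the zero polynomial (so all divisions in the algorithm occur with nonzero divisors). Then for every k = 1, ..., M−1 and every r = 1, ..., ⌈n/(M−1)⌉, the minor H_M(k,r) of the generalized Hurwitz matrix H_M(f) equals the product h_{M−k} · h_{2M−k−1} · h_{3M−k−2} ⋯ h_{rM−k−(r−1)}, where h_i denotes the leading coefficient of f_i and h_i := 0 for i > n. -/

import Mathlib

open Polynomial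

/-- The arithmetic part `f_j` of the polynomial with coefficients `a_0,...,a_n`:
`f_j(x) = Σ_{0 ≤ l ≤ n, l ≡ j (mod M)} a_l x^(n-l)`. -/
noncomputable def geaInit (a : ℕ → ℝ) (n M j : ℕ) : Polynomial ℝ :=
  ∑ l ∈ Finset.range (n + 1), if l % M = j then C (a l) * X ^ (n - l) else 0

/-- The polynomials `f_0, f_1, ..., f_n` of the generalized Euclidean algorithm with step `M`:
`f_i = d_i f_{i+1} + f_{i+M}` where `d_i = f_i / f_{i+1}` and `f_{i+M} = f_i % f_{i+1}`
(Euclidean division of polynomials). -/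
noncomputable def gea (a : ℕ → ℝ) (n M : ℕ) : ℕ → Polynomial ℝ
  | i =>
    if _h : i < M then geaInit a n M i
    else if _h2 : 2 ≤ M then
      gea a n M (i - M) % gea a n M (i - M + 1)
    else 0
  termination_by i => i
  decreasing_by all_goals omega

/-- Entry `(i,j)` (0-based) of the generalized Hurwitz matrix `H_M(f) = (a_{Mj-i})_{i,j≥1}`,
with `a_k := 0` for `k < 0` and `k > n`. -/
def hEntry (a : ℕ → ℝ) (n M : ℕ) (i j : ℕ) : ℝ :=
  if i + 1 ≤ M * (j + 1) ∧ M * (j + 1) - (i + 1) ≤ n then a (M * (j + 1) - (i + 1)) else 0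

/-- The special minor `H_M(k,r)` on rows `k, k+1, ..., k+r-1` and columns `1, ..., r`
(1-based indexing). -/
noncomputable def specialMinor (a : ℕ → ℝ) (n M k r : ℕ) : ℝ :=
  Matrix.det (Matrix.of fun s t : Fin r => hEntry a n M (k - 1 + s) t)

/-!
Every `f_i` contains only monomials `x^m` with `m ≡ n - i (mod M)`, and Euclidean division
preserves such residue classes. With non-degeneracy this forces `deg f_i = n - i` for `i ≤ n`
and `f_i = 0` for `n < i ≤ n + M - 2`, so each division step reads
`f_{c+M} = f_c - (h_c / h_{c+1}) x f_{c+1}`.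

Row `i` of `H_M(f)` is the coefficient row of the `f_ν` with `ν ≡ -i (mod M)`, and multiplying a
polynomial by `x` moves its coefficient row one row down. The division steps therefore act on the
rows of `H_M(k, r)` by adding multiples of earlier rows, and they turn row `s` into the
coefficient row of `f_{(s+1)M-k-s}`. These rows form an upper triangular matrix whose diagonal
consists of the leading coefficients `h_{(s+1)M-k-s}`.
-/

namespace Polynomial

section ModSupported

variable {R : Type*} [Semiring R] (M : ℕ)

def ModSupported (γ : ZMod M) (p : R[X]) : Prop :=
  ∀ m, p.coeff m ≠ 0 → (m : ZMod M) = γ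

noncomputable def modPart (γ : ZMod M) (p : R[X]) : R[X] :=
  ∑ m ∈ p.support.filter (fun m : ℕ => (m : ZMod M) = γ), monomial m (p.coeff m)

variable {M}

theorem coeff_modPart (γ : ZMod M) (p : R[X]) (m : ℕ) :
    (modPart M γ p).coeff m = if (m : ZMod M) = γ then p.coeff m else 0 := by
  simp only [modPart, finsetSum_coeff, coeff_monomial, Finset.sum_ite_eq', Finset.mem_filter,
    mem_support_iff]
  split_ifs <;> simp_all

theorem modPart_add (γ : ZMod M) (p q : R[X]) :
    modPart M γ (p + q) = modPart M γ p + modPart M γ q := by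
  ext m
  simp only [coeff_add, coeff_modPart]
  split_ifs <;> simp

theorem degree_modPart_le (γ : ZMod M) (p : R[X]) : (modPart M γ p).degree ≤ p.degree := by
  refine degree_mono fun m hm => ?_
  rw [mem_support_iff, coeff_modPart] at hm
  split_ifs at hm
  · exact mem_support_iff.mpr hm
  · exact absurd rfl hm

theorem modSupported_modPart (γ : ZMod M) (p : R[X]) : ModSupported M γ (modPart M γ p) := by
  intro m hm
  rw [coeff_modPart] at hm
  split_ifs at hm with h
  · exact h
  · exact absurd rfl hm

theorem ModSupported.coeff_eq_zero {γ : ZMod M} {p : R[X]} (hp : ModSupported M γ p) {m : ℕ}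
    (hm : (m : ZMod M) ≠ γ) : p.coeff m = 0 :=
  not_imp_comm.mp (hp m) hm

theorem modSupported_iff_modPart_eq {γ : ZMod M} {p : R[X]} :
    ModSupported M γ p ↔ modPart M γ p = p := by
  refine ⟨fun hp => ?_, fun hp => hp ▸ modSupported_modPart γ p⟩
  ext m
  rw [coeff_modPart]
  split_ifs with h
  · rfl
  · exact (hp.coeff_eq_zero h).symm

theorem ModSupported.modPart_mul {β : ZMod M} {q : R[X]} (hq : ModSupported M β q)
    (γ : ZMod M) (c : R[X]) : modPart M γ (q * c) = q * modPart M (γ - β) c := by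
  ext m
  simp only [coeff_modPart, coeff_mul]
  split_ifs with hγ
  · refine Finset.sum_congr rfl fun x hx => ?_
    rw [Finset.HasAntidiagonal.mem_antidiagonal] at hx
    by_cases hx1 : q.coeff x.1 = 0
    · simp [hx1]
    have : (x.2 : ZMod M) = γ - β := by
      rw [← hγ, ← hx, Nat.cast_add, hq _ hx1]; ring
    simp [this]
  · refine (Finset.sum_eq_zero fun x hx => ?_).symm
    rw [Finset.HasAntidiagonal.mem_antidiagonal] at hx
    by_cases hx1 : q.coeff x.1 = 0
    · simp [hx1]
    have : (x.2 : ZMod M) ≠ γ - β := by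
      rintro h; apply hγ; rw [← hx, Nat.cast_add, hq _ hx1, h]; ring
    simp [this]

theorem ModSupported.mul {β δ : ZMod M} {p q : R[X]} (hp : ModSupported M β p)
    (hq : ModSupported M δ q) : ModSupported M (β + δ) (p * q) := by
  rw [modSupported_iff_modPart_eq] at hq ⊢
  rw [hp.modPart_mul, add_sub_cancel_left, hq]

theorem modSupported_X : ModSupported M 1 (X : R[X]) := by
  intro m hm
  rw [coeff_X] at hm
  split_ifs at hm with h
  · simp [← h]
  · exact absurd rfl hm

theorem modSupported_C (c : R) : ModSupported M 0 (C c) := by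
  intro m hm
  rw [coeff_C] at hm
  split_ifs at hm with h
  · simp [h]
  · exact absurd rfl hm

theorem ModSupported.natDegree_add_modEq {n c : ℕ} {p : R[X]}
    (hp : ModSupported M ((n : ZMod M) - c) p) (h0 : p ≠ 0) : p.natDegree + c ≡ n [MOD M] := by
  rw [← ZMod.natCast_eq_natCast_iff, Nat.cast_add, hp _ (mt leadingCoeff_eq_zero.mp h0),
    sub_add_cancel]

end ModSupported

section Ring

variable {R : Type*} [Ring R] {M : ℕ}

theorem ModSupported.sub {γ : ZMod M} {p q : R[X]} (hp : ModSupported M γ p)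
    (hq : ModSupported M γ q) : ModSupported M γ (p - q) := by
  intro m hm
  rw [coeff_sub] at hm
  by_contra h
  rw [hp.coeff_eq_zero h, hq.coeff_eq_zero h, sub_zero] at hm
  exact hm rfl

end Ring

theorem ModSupported.mod {K : Type*} [Field K] {M : ℕ} {α β : ZMod M} {p q : K[X]}
    (hp : ModSupported M α p) (hq : ModSupported M β q) : ModSupported M α (p % q) := by
  rcases eq_or_ne q 0 with rfl | hq0
  · rwa [EuclideanDomain.mod_zero]
  have hdecomp : p = q * modPart M (α - β) (p / q) + modPart M α (p % q) := by
    conv_lhs => rw [← modSupported_iff_modPart_eq.mp hp, ← EuclideanDomain.div_add_mod p q]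
    rw [modPart_add, hq.modPart_mul]
  have hsmall : (modPart M α (p % q)).degree < q.degree :=
    (degree_modPart_le _ _).trans_lt (degree_mod_lt p hq0)
  rw [modSupported_iff_modPart_eq]
  exact ((mod_eq_of_dvd_sub (Dvd.intro _ (sub_eq_of_eq_add hdecomp).symm)).trans
    ((mod_eq_self_iff hq0).mpr hsmall)).symm

end Polynomial

theorem Matrix.det_eq_of_forall_row_sub_mem_span_lt {R m : Type*} [CommRing R] [Fintype m]
    [LinearOrder m] {u v : m → m → R}
    (h : ∀ t, v t - u t ∈ Submodule.span R (u '' Set.Iio t)) : (of v).det = (of u).det := by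
  choose c hc_supp hc using fun t => (Finsupp.mem_span_image_iff_linearCombination R).mp (h t)
  have hc_lt {t s : m} (hts : t ≤ s) : c t s = 0 :=
    Finsupp.notMem_support_iff.mp fun hs => not_lt.mpr hts (hc_supp t hs)
  let L : Matrix m m R := 1 + of fun t s => c t s
  have hL : L.IsLowerTriangular := fun t s (hts : t < s) => by
    simp [L, Matrix.one_apply_ne hts.ne, hc_lt hts.le]
  have hB : of v = L * of u := by
    rw [add_mul, Matrix.one_mul]
    ext t j
    have := hc t
    rw [Finsupp.linearCombination_apply, Finsupp.sum_fintype _ _ (by simp)] at this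
    have := congr_fun this j
    simp only [Finset.sum_apply, Pi.smul_apply, smul_eq_mul, Pi.sub_apply] at this
    simp only [Matrix.add_apply, Matrix.mul_apply, of_apply]
    linear_combination -this
  rw [hB, Matrix.det_mul, Matrix.det_of_isLowerTriangular L hL]
  simp [L, hc_lt le_rfl]

section HurwitzRow

variable {R : Type*} [Ring R] (n M : ℕ)

/-- Row `i` (counted from `0`, as in `hEntry`) of the generalized Hurwitz matrix of `p`, with `p`
read as a polynomial of formal degree `n`. -/
def hurwitzRow (p : R[X]) (i j : ℕ) : R :=
  if M * (j + 1) ≤ n + i + 1 then p.coeff (n + i + 1 - M * (j + 1)) else 0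

@[simp]
theorem hurwitzRow_zero (i : ℕ) : hurwitzRow n M (0 : R[X]) i = 0 := by
  ext j
  simp [hurwitzRow]

theorem hurwitzRow_sub (p q : R[X]) (i : ℕ) :
    hurwitzRow n M (p - q) i = hurwitzRow n M p i - hurwitzRow n M q i := by
  ext j
  simp only [hurwitzRow, Pi.sub_apply, coeff_sub]
  split_ifs <;> simp

theorem hurwitzRow_C_mul (γ : R) (p : R[X]) (i : ℕ) :
    hurwitzRow n M (C γ * p) i = γ • hurwitzRow n M p i := by
  ext j
  simp only [hurwitzRow, Pi.smul_apply, coeff_C_mul, smul_eq_mul]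
  split_ifs <;> simp

theorem hurwitzRow_mul_X (p : R[X]) (i : ℕ) :
    hurwitzRow n M (p * X) (i + 1) = hurwitzRow n M p i := by
  ext j
  simp only [hurwitzRow]
  by_cases h : M * (j + 1) ≤ n + i + 1
  · rw [if_pos (by omega), if_pos h,
      show n + (i + 1) + 1 - M * (j + 1) = n + i + 1 - M * (j + 1) + 1 by omega, coeff_mul_X]
  · rw [if_neg h]
    split_ifs with h'
    · rw [show n + (i + 1) + 1 - M * (j + 1) = 0 by omega, mul_coeff_zero, coeff_X_zero, mul_zero]
    · rfl

variable {n M}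

theorem hurwitzRow_eq_zero_of_lt (hM : 0 < M) {p : R[X]} {i s t : ℕ}
    (hp : p.natDegree + M * (s + 1) ≤ n + i + 1) (hts : t < s) : hurwitzRow n M p i t = 0 := by
  have : M * (t + 1) < M * (s + 1) := Nat.mul_lt_mul_of_pos_left (by omega) hM
  unfold hurwitzRow
  split_ifs
  · exact coeff_eq_zero_of_natDegree_lt (by omega)
  · rfl

theorem hurwitzRow_eq_leadingCoeff {p : R[X]} {i s : ℕ}
    (hp : p.natDegree + M * (s + 1) = n + i + 1) : hurwitzRow n M p i s = p.leadingCoeff := by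
  rw [hurwitzRow, if_pos (by omega), show n + i + 1 - M * (s + 1) = p.natDegree by omega]
  rfl

end HurwitzRow

section GeneralizedEuclid

variable (a : ℕ → ℝ) (n : ℕ)

theorem gea_of_lt {M i : ℕ} (h : i < M) : gea a n M i = geaInit a n M i := by
  rw [gea, dif_pos h]

theorem gea_add {M : ℕ} (hM : 2 ≤ M) (i : ℕ) :
    gea a n M (i + M) = gea a n M i % gea a n M (i + 1) := by
  rw [gea, dif_neg (by omega), dif_pos hM, Nat.add_sub_cancel]

theorem coeff_geaInit (M j m : ℕ) : (geaInit a n M j).coeff m =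
    if m ≤ n ∧ (n - m) % M = j then a (n - m) else 0 := by
  simp only [geaInit, finsetSum_coeff, apply_ite (coeff · m), coeff_C_mul_X_pow, coeff_zero]
  rw [Finset.sum_eq_single (n - m)]
  · by_cases hmn : m ≤ n
    · simp [hmn, Nat.sub_sub_self hmn]
    · simp [hmn, show m ≠ n - (n - m) by omega]
  · intro l hl hlm
    simp [show m ≠ n - l by simp at hl; omega]
  · simp

theorem modSupported_geaInit (M j : ℕ) :
    ModSupported M ((n : ZMod M) - j) (geaInit a n M j) := by
  intro m hm
  rw [coeff_geaInit] at hm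
  split_ifs at hm with h
  · rw [← h.2, ZMod.natCast_mod, Nat.cast_sub h.1]
    ring
  · exact absurd rfl hm

theorem natDegree_geaInit_le (M j : ℕ) : (geaInit a n M j).natDegree ≤ n - j := by
  refine natDegree_le_iff_coeff_eq_zero.mpr fun m hm => ?_
  rw [coeff_geaInit, if_neg]
  rintro ⟨hmn, hmod⟩
  have := hmod ▸ Nat.mod_le (n - m) M
  omega

theorem geaInit_eq_zero {M j : ℕ} (hj : n < j) : geaInit a n M j = 0 := by
  ext m
  rw [coeff_geaInit, coeff_zero, if_neg]
  rintro ⟨-, hmod⟩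
  have := hmod ▸ Nat.mod_le (n - m) M
  omega

theorem hEntry_eq_hurwitzRow_gea {M i ν : ℕ} (hν : ν < M)
    (hiν : (i + 1 + ν) % M = 0) : hEntry a n M i = hurwitzRow n M (gea a n M ν) i := by
  ext j
  rw [hEntry, hurwitzRow, gea_of_lt a n hν, coeff_geaInit]
  by_cases h : i + 1 ≤ M * (j + 1) ∧ M * (j + 1) - (i + 1) ≤ n
  · have hl : (M * (j + 1) - (i + 1)) % M = ν := by
      have := congr_arg (· % M)
        (show M * (j + 1) - (i + 1) + (i + 1 + ν) = ν + M * (j + 1) by omega)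
      simpa [Nat.add_mod _ (i + 1 + ν), hiν, Nat.mod_eq_of_lt hν] using this
    have hm : n - (n + i + 1 - M * (j + 1)) = M * (j + 1) - (i + 1) := by omega
    rw [if_pos h, if_pos (by omega), hm, if_pos ⟨by omega, hl⟩]
  · rw [if_neg h]
    split_ifs with h1 h2 <;> first | rfl | omega

variable {a n}

theorem modSupported_gea {M : ℕ} (hM : 2 ≤ M) (i : ℕ) :
    ModSupported M ((n : ZMod M) - i) (gea a n M i) := by
  induction i using Nat.strong_induction_on with
  | _ i ih =>
    rcases lt_or_ge i M with hi | hi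
    · rw [gea_of_lt a n hi]
      exact modSupported_geaInit a n M i
    · obtain ⟨c, rfl⟩ := Nat.exists_eq_add_of_le' hi
      rw [gea_add a n hM]
      have hc := ih c (by omega)
      rw [Nat.cast_add, ZMod.natCast_self, add_zero]
      exact hc.mod (ih (c + 1) (by omega))

theorem natDegree_gea_add_lt {M : ℕ} (hM : 2 ≤ M) {c : ℕ} (h0 : gea a n M (c + M) ≠ 0)
    (h1 : gea a n M (c + 1) ≠ 0) :
    (gea a n M (c + M)).natDegree < (gea a n M (c + 1)).natDegree := by
  rw [gea_add a n hM] at h0 ⊢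
  exact natDegree_lt_natDegree h0 (degree_mod_lt _ h1)

end GeneralizedEuclid

section Nondegenerate

variable {a : ℕ → ℝ} {n M : ℕ} (hM : 2 ≤ M) (hnz : ∀ i ≤ n, gea a n M i ≠ 0)
include hM hnz

theorem natDegree_gea_le {i : ℕ} (hi : i ≤ n) : (gea a n M i).natDegree ≤ n - i := by
  induction i using Nat.strong_induction_on with
  | _ i ih =>
    rcases lt_or_ge i M with hiM | hiM
    · rw [gea_of_lt a n hiM]
      exact natDegree_geaInit_le a n M i
    obtain ⟨c, rfl⟩ := Nat.exists_eq_add_of_le' hiM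
    have hlt := natDegree_gea_add_lt hM (hnz _ hi) (hnz _ (by omega))
    have := ih (c + 1) (by omega) (by omega)
    have := ((modSupported_gea hM _).natDegree_add_modEq (hnz _ hi)).le_of_lt_add (by omega)
    omega

theorem le_natDegree_gea {i : ℕ} (hi1 : 1 ≤ i) (hi : i ≤ n) :
    n - i ≤ (gea a n M i).natDegree := by
  induction hd : n - i using Nat.strong_induction_on generalizing i with
  | _ d ih =>
    obtain ⟨c, rfl⟩ : ∃ c, i = c + 1 := ⟨i - 1, by omega⟩
    suffices h : n < (gea a n M (c + 1)).natDegree + (c + 1) + M by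
      have := ((modSupported_gea hM _).natDegree_add_modEq (hnz _ hi)).symm.le_of_lt_add h
      omega
    by_cases hcM : c + M ≤ n
    · have hlt := natDegree_gea_add_lt hM (hnz _ hcM) (hnz _ hi)
      have := ih (n - (c + M)) (by omega) (by omega) hcM rfl
      omega
    · omega

theorem gea_eq_zero {e : ℕ} (hne : n < e) (hen : e ≤ n + M - 2) : gea a n M e = 0 := by
  rcases lt_or_ge e M with heM | heM
  · rw [gea_of_lt a n heM, geaInit_eq_zero a n hne]
  by_contra h0
  obtain ⟨c, rfl⟩ := Nat.exists_eq_add_of_le' heM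
  have hlt := natDegree_gea_add_lt hM h0 (hnz _ (by omega))
  have := natDegree_gea_le hM hnz (i := c + 1) (by omega)
  have hmod := (modSupported_gea hM _).natDegree_add_modEq h0
  have := (Nat.add_modEq_right.trans hmod.symm).le_of_lt_add (by omega)
  omega

theorem natDegree_gea (ha0 : a 0 ≠ 0) {i : ℕ} (hi : i ≤ n) :
    (gea a n M i).natDegree = n - i := by
  refine le_antisymm (natDegree_gea_le hM hnz hi) ?_
  rcases Nat.eq_zero_or_pos i with rfl | hi1
  · refine le_natDegree_of_ne_zero ?_
    rw [gea_of_lt a n (by omega), coeff_geaInit]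
    simpa using ha0
  · exact le_natDegree_gea hM hnz hi1 hi

theorem gea_add_eq_sub (ha0 : a 0 ≠ 0) {c : ℕ} (hc : c + 2 ≤ n) :
    gea a n M (c + M) = gea a n M c - C ((gea a n M c).leadingCoeff /
      (gea a n M (c + 1)).leadingCoeff) * (gea a n M (c + 1) * X) := by
  set p := gea a n M c
  set q := gea a n M (c + 1)
  set r := p - C (p.leadingCoeff / q.leadingCoeff) * (q * X)
  have hp0 : p ≠ 0 := hnz c (by omega)
  have hq0 : q ≠ 0 := hnz (c + 1) (by omega)
  have hpd : p.natDegree = n - c := natDegree_gea hM hnz ha0 (by omega)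
  have hqd : q.natDegree = n - c - 1 := natDegree_gea hM hnz ha0 (by omega)
  have hγ : p.leadingCoeff / q.leadingCoeff ≠ 0 := by simp [hp0, hq0]
  have hr_lt_p : r.degree < p.degree := by
    refine degree_sub_lt_left ?_ hp0 ?_
    · rw [degree_C_mul hγ, degree_mul_X, degree_eq_natDegree hp0, degree_eq_natDegree hq0, hpd,
        hqd]
      norm_cast
      omega
    · rw [leadingCoeff_C_mul_of_isUnit (Ne.isUnit hγ), leadingCoeff_mul_X,
        div_mul_cancel₀ _ (leadingCoeff_ne_zero.mpr hq0)]
  have hr_class : ModSupported M ((n : ZMod M) - c) r := by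
    have hXq := (modSupported_C (M := M) (p.leadingCoeff / q.leadingCoeff)).mul
      ((modSupported_gea (a := a) (n := n) hM (c + 1)).mul modSupported_X)
    rw [show (0 : ZMod M) + ((n : ZMod M) - (c + 1 : ℕ) + 1) = n - c by push_cast; ring] at hXq
    exact (modSupported_gea hM c).sub hXq
  have hr_lt_q : r.degree < q.degree := by
    rcases eq_or_ne r 0 with hr0 | hr0
    · rw [hr0, degree_zero]
      exact bot_lt_iff_ne_bot.mpr (degree_eq_bot.not.mpr hq0)
    have hr := natDegree_lt_natDegree hr0 hr_lt_p
    have hdrop : r.natDegree + c + M ≤ n := by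
      by_contra! h
      have := (hr_class.natDegree_add_modEq hr0).symm.le_of_lt_add h
      omega
    rw [degree_eq_natDegree hr0, degree_eq_natDegree hq0, hqd]
    norm_cast
    omega
  have hdvd : q ∣ p - r := ⟨C (p.leadingCoeff / q.leadingCoeff) * X, by simp only [r]; ring⟩
  rw [gea_add a n hM, mod_eq_of_dvd_sub hdvd, (mod_eq_self_iff hq0).mpr hr_lt_q]

/-- The bound `hcd` says `c ≤ (d + 1) (M - 1)`: after at most `d` steps `c ↦ c + 1 - M`, each
moving one row up, the index drops below `M`. -/
theorem hurwitzRow_gea_sub_hEntry_mem_span (ha0 : a 0 ≠ 0) {c i d : ℕ} (hc : c ≤ n + M - 2)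
    (hcd : c + d + 1 ≤ (d + 1) * M) (hdi : d ≤ i) (hic : (i + 1 + c) % M = 0) :
    hurwitzRow n M (gea a n M c) i - hEntry a n M i ∈
      Submodule.span ℝ (hEntry a n M '' Set.Ico (i - d) i) := by
  induction c using Nat.strong_induction_on generalizing i d with
  | _ c ih =>
  rcases lt_or_ge c M with hcM | hcM
  · rw [← hEntry_eq_hurwitzRow_gea a n hcM hic, sub_self]
    exact zero_mem _
  obtain ⟨c, rfl⟩ := Nat.exists_eq_add_of_le' hcM
  obtain ⟨d, rfl⟩ : ∃ d', d = d' + 1 := Nat.exists_eq_succ_of_ne_zero (by rintro rfl; omega)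
  obtain ⟨i, rfl⟩ : ∃ i', i = i' + 1 := ⟨i - 1, by omega⟩
  have hdM : (d + 1 + 1) * M = (d + 1) * M + M := by ring
  rw [← Nat.add_assoc, Nat.add_mod_right] at hic
  have hrow := ih c (by omega) (by omega) (by omega) hdi hic
  have hrow' := ih (c + 1) (i := i) (d := d) (by omega) (by omega) (by omega) (by omega)
    (by rwa [Nat.add_right_comm _ 1 c] at hic)
  have hprev : hEntry a n M i ∈
      Submodule.span ℝ (hEntry a n M '' Set.Ico (i + 1 - (d + 1)) (i + 1)) :=
    Submodule.subset_span ⟨i, ⟨by omega, by omega⟩, rfl⟩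
  have hsub :
      hEntry a n M '' Set.Ico (i - d) i ⊆ hEntry a n M '' Set.Ico (i + 1 - (d + 1)) (i + 1) :=
    Set.image_mono (Set.Ico_subset_Ico (by omega) (by omega))
  set γ := (gea a n M c).leadingCoeff / (gea a n M (c + 1)).leadingCoeff
  rw [gea_add_eq_sub hM hnz ha0 (by omega), hurwitzRow_sub, hurwitzRow_C_mul, hurwitzRow_mul_X]
  convert sub_mem hrow (Submodule.smul_mem _ γ (add_mem (Submodule.span_mono hsub hrow') hprev))
    using 1
  module

theorem hurwitzRow_gea_eq_zero_of_lt (ha0 : a 0 ≠ 0) {e i s t : ℕ}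
    (he : i + 1 + e = M * (s + 1)) (hen : e ≤ n + M - 2) (hts : t < s) :
    hurwitzRow n M (gea a n M e) i t = 0 := by
  rcases le_or_gt e n with hle | hlt
  · refine hurwitzRow_eq_zero_of_lt (by omega) ?_ hts
    rw [natDegree_gea hM hnz ha0 hle]
    omega
  · rw [gea_eq_zero hM hnz hlt hen, hurwitzRow_zero, Pi.zero_apply]

theorem hurwitzRow_gea_self (ha0 : a 0 ≠ 0) {e i s : ℕ} (he : i + 1 + e = M * (s + 1))
    (hen : e ≤ n + M - 2) :
    hurwitzRow n M (gea a n M e) i s = if e ≤ n then (gea a n M e).leadingCoeff else 0 := by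
  split_ifs with hle
  · refine hurwitzRow_eq_leadingCoeff ?_
    rw [natDegree_gea hM hnz ha0 hle]
    omega
  · rw [gea_eq_zero hM hnz (not_le.mp hle) hen, hurwitzRow_zero, Pi.zero_apply]

end Nondegenerate

def pivotIndex (M k s : ℕ) : ℕ := (s + 1) * M - k - s

theorem pivotIndex_add {M k : ℕ} (hk1 : 1 ≤ k) (hkM : k ≤ M - 1) (s : ℕ) :
    k - 1 + s + 1 + pivotIndex M k s = M * (s + 1) := by
  have h1 : s ≤ s * M := Nat.le_mul_of_pos_right s (by omega)
  have h2 : M * (s + 1) = s * M + M := by ring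
  rw [pivotIndex, h2, add_one_mul]
  omega

theorem pivotIndex_le {n M k r s : ℕ} (hk1 : 1 ≤ k) (hr : r ≤ (n + M - 2) / (M - 1))
    (hs : s < r) : pivotIndex M k s ≤ n + M - 2 := by
  have h1 : (s + 1) * (M - 1) ≤ r * (M - 1) := Nat.mul_le_mul_right _ hs
  have h2 : r * (M - 1) ≤ n + M - 2 := (Nat.mul_le_mul_right _ hr).trans (Nat.div_mul_le_self _ _)
  have h3 : (s + 1) * (M - 1) = (s + 1) * M - (s + 1) := Nat.mul_sub_one _ _
  rw [pivotIndex]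
  omega

theorem specialMinor_eq_det_hurwitzRow_gea {a : ℕ → ℝ} {n M : ℕ} (hM : 2 ≤ M)
    (hnz : ∀ i ≤ n, gea a n M i ≠ 0) (ha0 : a 0 ≠ 0) {k r : ℕ} (hk1 : 1 ≤ k) (hkM : k ≤ M - 1)
    (hr : r ≤ (n + M - 2) / (M - 1)) :
    specialMinor a n M k r = (Matrix.of fun s t : Fin r =>
      hurwitzRow n M (gea a n M (pivotIndex M k s)) (k - 1 + s) t).det := by
  refine (Matrix.det_eq_of_forall_row_sub_mem_span_lt fun s => ?_).symm
  have hadd := pivotIndex_add hk1 hkM s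
  have hspan := hurwitzRow_gea_sub_hEntry_mem_span hM hnz ha0 (c := pivotIndex M k s)
    (i := k - 1 + s) (d := s) (pivotIndex_le hk1 hr s.2) (by rw [mul_comm] at hadd; omega)
    (by omega) (by rw [hadd, Nat.mul_mod_right])
  refine Submodule.span_mono ?_ (Submodule.apply_mem_span_image_of_mem_span
    (LinearMap.funLeft ℝ ℝ (Fin.val : Fin r → ℕ)) hspan)
  rintro _ ⟨_, ⟨i, ⟨hi1, hi2⟩, rfl⟩, rfl⟩
  refine ⟨⟨i - (k - 1), by omega⟩, by simp only [Set.mem_Iio, Fin.lt_def]; omega, ?_⟩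
  ext t
  simp only [LinearMap.funLeft_apply]
  congr 2
  omega

theorem special_minor_eq_prod_leading_coeffs_general
    (n M : ℕ) (a : ℕ → ℝ) (ha0 : 0 < a 0) (hM : 2 ≤ M)
    (hnz : ∀ i ≤ n, gea a n M i ≠ 0) :
    ∀ k r : ℕ, 1 ≤ k → k ≤ M - 1 → 1 ≤ r → r ≤ (n + M - 2) / (M - 1) →
      specialMinor a n M k r =
        ∏ t ∈ Finset.range r,
          (if (t + 1) * M - k - t ≤ n
            then (gea a n M ((t + 1) * M - k - t)).leadingCoeff else 0) := by
  intro k r hk1 hkM _ hr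
  have hdiag (s : Fin r) := hurwitzRow_gea_self hM hnz ha0.ne' (pivotIndex_add hk1 hkM s)
    (pivotIndex_le hk1 hr s.2)
  rw [specialMinor_eq_det_hurwitzRow_gea hM hnz ha0.ne' hk1 hkM hr]
  refine (Matrix.det_of_isUpperTriangular fun s t (hts : t < s) => ?_).trans ?_
  · exact hurwitzRow_gea_eq_zero_of_lt hM hnz ha0.ne' (pivotIndex_add hk1 hkM s)
      (pivotIndex_le hk1 hr s.2) hts
  · simp only [Matrix.of_apply, hdiag]
    exact Fin.prod_univ_eq_prod_range
      (fun t => if pivotIndex M k t ≤ n then (gea a n M (pivotIndex M k t)).leadingCoeff else 0) r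

/-- In the non-degenerate case of the generalized Euclidean algorithm, for every
`1 ≤ k ≤ M-1` and `1 ≤ r ≤ ⌈n/(M-1)⌉`, the special minor `H_M(k,r)` equals the product
`h_{M-k} · h_{2M-k-1} ⋯ h_{rM-k-(r-1)}`, where `h_i` is the leading coefficient of `f_i`
and `h_i := 0` for `i > n`. -/
theorem special_minor_eq_prod_leading_coeffs
    (n M : ℕ) (a : ℕ → ℝ) (ha0 : 0 < a 0) (hM : 2 ≤ M) (hMn : M ≤ n)
    (hnz : ∀ i ≤ n, gea a n M i ≠ 0) :
    ∀ k r : ℕ, 1 ≤ k → k ≤ M - 1 → 1 ≤ r → r ≤ (n + M - 2) / (M - 1) →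
      specialMinor a n M k r =
        ∏ t ∈ Finset.range r,
          (if (t + 1) * M - k - t ≤ n
            then (gea a n M ((t + 1) * M - k - t)).leadingCoeff else 0) :=
  special_minor_eq_prod_leading_coeffs_general n M a ha0 hM hnz
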